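/- Let X be a finite-dimensional real Hilbert space, a : X × X → ℝ a bilinear form with associated operator T (⟨Tw,v⟩ = a(w,v)). Suppose there exists a symmetric, coercive bilinear form p : X × X → ℝ such that φ(v,w) := p(Tv,w) + p(v,Tw) is coercive with constant c > 0. Then every solution y of ẏ(t) = −Ty(t) satisfies p(y(t),y(t)) ≤ e^{−(c/M) t} p(y(0),y(0)) for all t ≥ 0, where M is a bound with p(v,v) ≤ M‖v‖²; in particular the system is Lyapunov stable and y(t) → 0. -/

import Mathlib

/-!
`V(t) := p(y t, y t)` has derivative `-φ(y t, y t) ≤ -c‖y t‖² ≤ -(c/M) V(t)`, so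
`e^{(c/M) t} V(t)` is antitone.
-/

open Real

section

variable {𝕜 E F : Type*} [NontriviallyNormedField 𝕜] [CompleteSpace 𝕜]
  [NormedAddCommGroup E] [NormedSpace 𝕜 E] [FiniteDimensional 𝕜 E]
  [NormedAddCommGroup F] [NormedSpace 𝕜 F] [FiniteDimensional 𝕜 F]

theorem HasDerivAt.linearMap_bilin_apply (p : E →ₗ[𝕜] F →ₗ[𝕜] 𝕜) {u : 𝕜 → E} {v : 𝕜 → F}
    {u' : E} {v' : F} {t : 𝕜} (hu : HasDerivAt u u' t) (hv : HasDerivAt v v' t) :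
    HasDerivAt (fun s => p (u s) (v s)) (p u' (v t) + p (u t) v') t := by
  let B : E →L[𝕜] F →L[𝕜] 𝕜 :=
    LinearMap.toContinuousLinearMap (LinearMap.toContinuousLinearMap.toLinearMap ∘ₗ p)
  exact (B.hasFDerivAt.comp_hasDerivAt t hu).clm_apply hv

end

theorem le_exp_neg_mul_mul_of_hasDerivAt {V V' : ℝ → ℝ} {k : ℝ}
    (hV : ∀ s, HasDerivAt V (V' s) s) (hV' : ∀ s, V' s ≤ -k * V s) {t : ℝ} (ht : 0 ≤ t) :
    V t ≤ exp (-k * t) * V 0 := by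
  have hW : ∀ s, HasDerivAt (fun s => exp (k * s) * V s)
      (k * exp (k * s) * V s + exp (k * s) * V' s) s := fun s =>
    (((hasDerivAt_id s).const_mul k).exp.congr_deriv (by simp [mul_comm])).mul (hV s)
  have hanti : Antitone fun s => exp (k * s) * V s :=
    antitone_of_deriv_nonpos (fun s => (hW s).differentiableAt) fun s => by
      rw [(hW s).deriv]
      nlinarith [hV' s, exp_pos (k * s)]
  have hdecay := hanti ht
  simp only [mul_zero, exp_zero, one_mul] at hdecay
  rw [neg_mul, exp_neg, ← div_eq_inv_mul, le_div_iff₀ (exp_pos _)]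
  linarith

open scoped RealInnerProductSpace

theorem lyapunov_function_decay_general
    {X : Type*} [NormedAddCommGroup X] [InnerProductSpace ℝ X] [FiniteDimensional ℝ X]
    (T : X →L[ℝ] X)
    (p : X →ₗ[ℝ] X →ₗ[ℝ] ℝ)
    (m M : ℝ) (hm : 0 < m) (hmM : m ≤ M)
    (hpupp : ∀ v : X, p v v ≤ M * ‖v‖ ^ 2)
    (c : ℝ) (hc : 0 < c)
    (hφ : ∀ v : X, c * ‖v‖ ^ 2 ≤ p (T v) v + p v (T v)) :
    ∀ y : ℝ → X, (∀ t : ℝ, HasDerivAt y (-(T (y t))) t) →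
      ∀ t : ℝ, 0 ≤ t → p (y t) (y t) ≤ Real.exp (-(c / M) * t) * p (y 0) (y 0) := by
  intro y hy t ht
  have hM : 0 < M := hm.trans_le hmM
  refine le_exp_neg_mul_mul_of_hasDerivAt (fun s => (hy s).linearMap_bilin_apply p (hy s))
    (fun s => ?_) ht
  calc p (-T (y s)) (y s) + p (y s) (-T (y s)) = -(p (T (y s)) (y s) + p (y s) (T (y s))) := by
        simp only [map_neg, LinearMap.neg_apply]; ring
    _ ≤ -(c * ‖y s‖ ^ 2) := neg_le_neg (hφ (y s))
    _ = -(c / M) * (M * ‖y s‖ ^ 2) := by field_simp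
    _ ≤ -(c / M) * p (y s) (y s) :=
        mul_le_mul_of_nonpos_left (hpupp (y s)) (neg_nonpos.mpr (div_pos hc hM).le)

/-- Lyapunov stability via a Lyapunov functional: if `p` is a symmetric bilinear form with
`m‖v‖² ≤ p(v,v) ≤ M‖v‖²` (`0 < m ≤ M`) and `φ(v,w) := p(Tv,w) + p(v,Tw)` is coercive with
constant `c > 0`, then every solution of `ẏ = −Ty` satisfies
`p(y(t),y(t)) ≤ e^{−(c/M)t} p(y(0),y(0))` for `t ≥ 0`. -/
theorem lyapunov_function_decay
    {X : Type*} [NormedAddCommGroup X] [InnerProductSpace ℝ X] [FiniteDimensional ℝ X]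
    (a : X →ₗ[ℝ] X →ₗ[ℝ] ℝ)
    (T : X →L[ℝ] X) (hT : ∀ w v, ⟪T w, v⟫ = a w v)
    (p : X →ₗ[ℝ] X →ₗ[ℝ] ℝ) (hpsym : ∀ v w, p v w = p w v)
    (m M : ℝ) (hm : 0 < m) (hmM : m ≤ M)
    (hplow : ∀ v : X, m * ‖v‖ ^ 2 ≤ p v v) (hpupp : ∀ v : X, p v v ≤ M * ‖v‖ ^ 2)
    (c : ℝ) (hc : 0 < c)
    (hφ : ∀ v : X, c * ‖v‖ ^ 2 ≤ p (T v) v + p v (T v)) :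
    ∀ y : ℝ → X, (∀ t : ℝ, HasDerivAt y (-(T (y t))) t) →
      ∀ t : ℝ, 0 ≤ t → p (y t) (y t) ≤ Real.exp (-(c / M) * t) * p (y 0) (y 0) :=
  lyapunov_function_decay_general T p m M hm hmM hpupp c hc hφ
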